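/- arXiv:1807.05005 — 3 statements merged into one kernel-verified Lean document; each statement's English description precedes it below -/
import Mathlib

section
/- Let H : [0,T] → ℝ^d be Lipschitz with constant L and satisfy H₀ := min_{t∈[0,T]} |H(t)| > 0. Let S* ∈ (1/√2, 1). Then for any natural number m with m ≥ 2LT/(H₀(1 - S*)), the uniform partition t_j = jT/m of [0,T] satisfies: for all j = 0,…,m−1 and all t ∈ [t_j, t_{j+1}], H(t) · (H(t_j)/|H(t_j)|) ≥ S* |H(t)|. -/
open Set

/-! On the cell containing `t`, Lipschitz continuity keeps `H t` within `L T / m ≤ H₀ (1 - S) / 2`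
of `H tⱼ`, hence within `(1 - S) / (1 + S) · ‖H tⱼ‖`. A vector `u` that close to `v` satisfies
`⟪u, v / ‖v‖⟫ ≥ ‖v‖ - ‖u - v‖ ≥ S (‖v‖ + ‖u - v‖) ≥ S ‖u‖`. -/

theorem inner_inv_norm_smul_ge_of_norm_sub_le {E : Type*} [NormedAddCommGroup E]
    [InnerProductSpace ℝ E] {u v : E} {S : ℝ} (hS : 0 ≤ S)
    (h : (1 + S) * ‖u - v‖ ≤ (1 - S) * ‖v‖) :
    S * ‖u‖ ≤ inner ℝ u (‖v‖⁻¹ • v) := by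
  rcases eq_or_ne v 0 with rfl | hv
  · have : ‖u‖ = 0 := by
      simp only [sub_zero, norm_zero, mul_zero] at h
      nlinarith [norm_nonneg u]
    simp [this]
  have hv' : 0 < ‖v‖ := norm_pos_iff.mpr hv
  have hinner : ‖v‖ ^ 2 - ‖u - v‖ * ‖v‖ ≤ inner ℝ u v := by
    have hsplit : inner ℝ u v = ‖v‖ ^ 2 + inner ℝ (u - v) v := by
      rw [inner_sub_left, real_inner_self_eq_norm_sq]; ring
    rw [hsplit]
    linarith [neg_le_of_abs_le (abs_real_inner_le_norm (u - v) v)]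
  have hu : ‖u‖ ≤ ‖v‖ + ‖u - v‖ := norm_le_insert' u v
  calc S * ‖u‖ ≤ ‖v‖ - ‖u - v‖ := by nlinarith
    _ = ‖v‖⁻¹ * (‖v‖ ^ 2 - ‖u - v‖ * ‖v‖) := by field_simp
    _ ≤ ‖v‖⁻¹ * inner ℝ u v := by gcongr
    _ = inner ℝ u (‖v‖⁻¹ • v) := (real_inner_smul_right u v _).symm

section UniformPartition

variable {T t : ℝ} {m j : ℕ}

theorem mem_Icc_of_mem_uniform_cell (hT : 0 ≤ T) (hj : j < m)
    (ht : t ∈ Icc ((j : ℝ) * T / m) (((j : ℝ) + 1) * T / m)) : t ∈ Icc 0 T := by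
  have hm : (0 : ℝ) < m := by exact_mod_cast (Nat.zero_le j).trans_lt hj
  have hjm : (j : ℝ) + 1 ≤ m := by exact_mod_cast hj
  refine ⟨le_trans (by positivity) ht.1, ht.2.trans ?_⟩
  rw [div_le_iff₀ hm]
  nlinarith

theorem left_mem_uniform_cell (hT : 0 ≤ T) :
    (j : ℝ) * T / m ∈ Icc ((j : ℝ) * T / m) (((j : ℝ) + 1) * T / m) :=
  left_mem_Icc.mpr (by gcongr; linarith)

theorem abs_sub_le_of_mem_uniform_cell
    (ht : t ∈ Icc ((j : ℝ) * T / m) (((j : ℝ) + 1) * T / m)) :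
    |t - j * T / m| ≤ T / m := by
  have hcell : ((j : ℝ) + 1) * T / m = j * T / m + T / m := by ring
  rw [abs_of_nonneg (sub_nonneg.mpr ht.1)]
  linarith [ht.2]

end UniformPartition

theorem stmt0_general (d : ℕ) (T L S H0 : ℝ) (hT : 0 < T)
    (H : ℝ → EuclideanSpace ℝ (Fin d))
    (hLip : ∀ t ∈ Set.Icc (0:ℝ) T, ∀ s ∈ Set.Icc (0:ℝ) T, ‖H t - H s‖ ≤ L * |t - s|)
    (hH0 : IsLeast ((fun t => ‖H t‖) '' Set.Icc (0:ℝ) T) H0)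
    (hH0pos : 0 < H0)
    (hS : 1 / Real.sqrt 2 < S ∧ S < 1)
    (m : ℕ) (hm : (m : ℝ) ≥ 2 * L * T / (H0 * (1 - S))) :
    ∀ j : ℕ, j < m → ∀ t ∈ Set.Icc ((j : ℝ) * T / m) (((j : ℝ) + 1) * T / m),
      (inner ℝ (H t) (‖H ((j : ℝ) * T / m)‖⁻¹ • H ((j : ℝ) * T / m)) : ℝ) ≥ S * ‖H t‖ := by
  intro j hj t ht
  obtain ⟨hS_pos, hS_lt⟩ : 0 < S ∧ S < 1 := ⟨lt_trans (by positivity) hS.1, hS.2⟩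
  have hm_pos : (0 : ℝ) < m := by exact_mod_cast (Nat.zero_le j).trans_lt hj
  have hL : 0 ≤ L := by
    have := (norm_nonneg _).trans (hLip T ⟨hT.le, le_rfl⟩ 0 ⟨le_rfl, hT.le⟩)
    rw [sub_zero, abs_of_pos hT] at this
    exact nonneg_of_mul_nonneg_left this hT
  have hstep : 2 * L * (T / m) ≤ H0 * (1 - S) := by
    rw [ge_iff_le, div_le_iff₀ (by nlinarith)] at hm
    rw [← mul_div_assoc, div_le_iff₀ hm_pos]
    linarith
  set tj : ℝ := (j : ℝ) * T / m
  have htj : tj ∈ Icc 0 T := mem_Icc_of_mem_uniform_cell hT.le hj (left_mem_uniform_cell hT.le)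
  apply inner_inv_norm_smul_ge_of_norm_sub_le hS_pos.le
  calc (1 + S) * ‖H t - H tj‖ ≤ 2 * (L * |t - tj|) := by
        gcongr
        · linarith
        · exact hLip t (mem_Icc_of_mem_uniform_cell hT.le hj ht) tj htj
    _ ≤ 2 * L * (T / m) := by
        rw [← mul_assoc]
        exact mul_le_mul_of_nonneg_left (abs_sub_le_of_mem_uniform_cell ht) (by positivity)
    _ ≤ H0 * (1 - S) := hstep
    _ ≤ (1 - S) * ‖H tj‖ := by
        rw [mul_comm]
        exact mul_le_mul_of_nonneg_left (hH0.2 ⟨tj, htj, rfl⟩) (by linarith)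

theorem stmt0 (d : ℕ) (T L S H0 : ℝ) (hT : 0 < T) (hL : 0 ≤ L)
    (H : ℝ → EuclideanSpace ℝ (Fin d))
    (hLip : ∀ t ∈ Set.Icc (0:ℝ) T, ∀ s ∈ Set.Icc (0:ℝ) T, ‖H t - H s‖ ≤ L * |t - s|)
    (hH0 : IsLeast ((fun t => ‖H t‖) '' Set.Icc (0:ℝ) T) H0)
    (hH0pos : 0 < H0)
    (hS : 1 / Real.sqrt 2 < S ∧ S < 1)
    (m : ℕ) (hm : (m : ℝ) ≥ 2 * L * T / (H0 * (1 - S))) :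
    ∀ j : ℕ, j < m → ∀ t ∈ Set.Icc ((j : ℝ) * T / m) (((j : ℝ) + 1) * T / m),
      (inner ℝ (H t) (‖H ((j : ℝ) * T / m)‖⁻¹ • H ((j : ℝ) * T / m)) : ℝ) ≥ S * ‖H t‖ :=
  stmt0_general d T L S H0 hT H hLip hH0 hH0pos hS m hm
end

section
/- Let Ω ⊂ ℝ^d be bounded with 0 ∈ closure(Ω) and diameter δ_Ω, S* ∈ (1/√2, 1), R ≥ ((1+S*)/(1−S*)) δ_Ω, η a unit vector, and x₀ := −Rη. Suppose v ∈ ℝ^d satisfies v · η ≥ S*|v| and |v| ≥ H₀ > 0. Then for every x ∈ closure(Ω), v · (x − x₀) ≥ (2S*² − 1) H₀ d, where d := min_{y ∈ closure(Ω)} |y − x₀|. -/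
/-! Both `v` and `x - x₀` lie in the cone of half-angle `θ = arccos S` around `η`: for `v` this is
the hypothesis, for `x - x₀ = x + R η` it holds because `‖x‖ ≤ diam Ω` is small compared with `R`.
By the triangle inequality for angles the two vectors make an angle at most `2θ ≤ π`, so
`⟪v, x - x₀⟫ ≥ cos (2θ) ‖v‖ ‖x - x₀‖ = (2 S² - 1) ‖v‖ ‖x - x₀‖`, and `‖x - x₀‖` is at least
the distance from `x₀` to `closure Ω`. -/

open Real InnerProductGeometry

section Cone

variable {V : Type*} [NormedAddCommGroup V] [InnerProductSpace ℝ V] {u w η : V} {S : ℝ}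

theorem angle_le_arccos_of_mul_norm_le_inner (hη : ‖η‖ = 1) (hu : u ≠ 0)
    (h : S * ‖u‖ ≤ inner ℝ u η) : angle u η ≤ arccos S := by
  rw [angle, hη, mul_one]
  exact arccos_le_arccos ((le_div_iff₀ (norm_pos_iff.mpr hu)).mpr h)

theorem two_mul_sq_sub_one_mul_le_inner (hη : ‖η‖ = 1) (hS₀ : 0 ≤ S) (hS₁ : S ≤ 1)
    (hu : S * ‖u‖ ≤ inner ℝ u η) (hw : S * ‖w‖ ≤ inner ℝ w η) :
    (2 * S ^ 2 - 1) * (‖u‖ * ‖w‖) ≤ inner ℝ u w := by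
  rcases eq_or_ne u 0 with rfl | hu₀
  · simp
  rcases eq_or_ne w 0 with rfl | hw₀
  · simp
  have hangle : angle u w ≤ 2 * arccos S := by
    calc angle u w ≤ angle u η + angle η w := angle_le_angle_add_angle u η w
      _ ≤ arccos S + arccos S := by
        rw [angle_comm η w]
        gcongr
        exacts [angle_le_arccos_of_mul_norm_le_inner hη hu₀ hu,
          angle_le_arccos_of_mul_norm_le_inner hη hw₀ hw]
      _ = 2 * arccos S := by ring
  have hcos : 2 * S ^ 2 - 1 ≤ cos (angle u w) := by
    rw [← cos_arccos (by linarith) hS₁, ← cos_two_mul]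
    refine cos_le_cos_of_nonneg_of_le_pi (angle_nonneg u w) ?_ hangle
    linarith [arccos_le_pi_div_two.mpr hS₀]
  rw [← cos_angle_mul_norm_mul_norm]
  gcongr

theorem mul_norm_add_smul_le_inner (hη : ‖η‖ = 1) (hS₀ : 0 ≤ S) (hS₁ : S < 1) {R : ℝ}
    (hR : (1 + S) * ‖u‖ ≤ (1 - S) * R) :
    S * ‖u + R • η‖ ≤ inner ℝ (u + R • η) η := by
  have hR₀ : 0 ≤ R := by nlinarith [norm_nonneg u]
  have hnorm : ‖u + R • η‖ ≤ ‖u‖ + R := by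
    simpa [norm_smul, hη, abs_of_nonneg hR₀] using norm_add_le u (R • η)
  have hinner : inner ℝ (u + R • η) η = inner ℝ u η + R := by
    rw [inner_add_left, real_inner_smul_left, real_inner_self_eq_norm_sq, hη]
    ring
  have hcs : -‖u‖ ≤ inner ℝ u η := by
    simpa [hη] using neg_le_of_abs_le (abs_real_inner_le_norm u η)
  nlinarith [mul_le_mul_of_nonneg_left hnorm hS₀]

end Cone

theorem stmt4_general (d : ℕ) (Ω : Set (EuclideanSpace ℝ (Fin d)))
    (hb : Bornology.IsBounded Ω)
    (h0 : (0 : EuclideanSpace ℝ (Fin d)) ∈ closure Ω)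
    (S R H0 : ℝ) (hS : 1 / Real.sqrt 2 < S ∧ S < 1)
    (η : EuclideanSpace ℝ (Fin d)) (hη : ‖η‖ = 1)
    (hR : R ≥ (1 + S) / (1 - S) * Metric.diam Ω)
    (x₀ : EuclideanSpace ℝ (Fin d)) (hx₀ : x₀ = -R • η)
    (v : EuclideanSpace ℝ (Fin d))
    (hv : (inner ℝ v η : ℝ) ≥ S * ‖v‖)
    (hvn : ‖v‖ ≥ H0) :
    ∀ x ∈ closure Ω,
      (inner ℝ v (x - x₀) : ℝ) ≥ (2 * S ^ 2 - 1) * H0 * Metric.infDist x₀ (closure Ω) := by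
  intro x hx
  obtain ⟨hS_gt, hS_lt⟩ := hS
  have hS_pos : 0 < S := lt_trans (by positivity) hS_gt
  have hS_sq : 1 / 2 < S ^ 2 := by
    rwa [one_div, ← sqrt_inv, sqrt_lt' hS_pos, ← one_div] at hS_gt
  have hx_le : ‖x‖ ≤ Metric.diam Ω := by
    simpa [Metric.diam_closure] using
      Metric.dist_le_diam_of_mem (Metric.isBounded_closure_of_isBounded hb) hx h0
  have hx_cone : S * ‖x - x₀‖ ≤ inner ℝ (x - x₀) η := by
    rw [hx₀, neg_smul, sub_neg_eq_add]
    refine mul_norm_add_smul_le_inner hη hS_pos.le hS_lt ?_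
    rw [ge_iff_le, div_mul_eq_mul_div, div_le_iff₀ (by linarith)] at hR
    nlinarith
  have hdist : Metric.infDist x₀ (closure Ω) ≤ ‖x - x₀‖ := by
    simpa [dist_eq_norm'] using Metric.infDist_le_dist_of_mem (x := x₀) hx
  calc (2 * S ^ 2 - 1) * H0 * Metric.infDist x₀ (closure Ω)
      ≤ (2 * S ^ 2 - 1) * (‖v‖ * ‖x - x₀‖) := by
        rw [mul_assoc]
        exact mul_le_mul_of_nonneg_left
          (mul_le_mul hvn hdist Metric.infDist_nonneg (norm_nonneg v)) (by linarith)
    _ ≤ inner ℝ v (x - x₀) := two_mul_sq_sub_one_mul_le_inner hη hS_pos.le hS_lt.le hv hx_cone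

theorem stmt4 (d : ℕ) (Ω : Set (EuclideanSpace ℝ (Fin d)))
    (hb : Bornology.IsBounded Ω)
    (h0 : (0 : EuclideanSpace ℝ (Fin d)) ∈ closure Ω)
    (S R H0 : ℝ) (hS : 1 / Real.sqrt 2 < S ∧ S < 1)
    (η : EuclideanSpace ℝ (Fin d)) (hη : ‖η‖ = 1)
    (hR : R ≥ (1 + S) / (1 - S) * Metric.diam Ω)
    (x₀ : EuclideanSpace ℝ (Fin d)) (hx₀ : x₀ = -R • η)
    (v : EuclideanSpace ℝ (Fin d))
    (hv : (inner ℝ v η : ℝ) ≥ S * ‖v‖)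
    (hH0 : 0 < H0) (hvn : ‖v‖ ≥ H0) :
    ∀ x ∈ closure Ω,
      (inner ℝ v (x - x₀) : ℝ) ≥ (2 * S ^ 2 - 1) * H0 * Metric.infDist x₀ (closure Ω) :=
  stmt4_general d Ω hb h0 S R H0 hS η hη hR x₀ hx₀ v hv hvn
end

section
/- Let ρ > 0, σ > 3ρ/2, Ω_σ = {z ∈ ℝ² : |z| < σ}, and let f ∈ C¹(ℝ²) with support contained in the open disc of radius ρ/2 centered at the origin. Define α(t) = (ρ cos t, ρ sin t) and v(x,y,t) = f(x − ρ cos t, y − ρ sin t). Then v satisfies ∂_t v + α'(t)·∇v = 0 on ℝ² × (0, 2π), |α'(t)| = ρ for all t, and v(·,·,t) vanishes on a neighborhood of ∂Ω_σ for every t ∈ [0, 2π]. -/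
open Real Set Metric Filter Topology

/-! The bump `v(·, t)` is the translate of `f` by a point moving on the circle of radius `ρ`, so the
transport equation is the chain rule, and `v(·, t)` is supported in the ball of radius `3ρ/2`,
which stays away from the sphere of radius `σ`. -/

theorem deriv_comp_sub_add_inner_gradient_eq_zero {E : Type*} [NormedAddCommGroup E]
    [InnerProductSpace ℝ E] [CompleteSpace E] {f : E → ℝ} {α : ℝ → E} {α' z : E} {t : ℝ}
    (hf : DifferentiableAt ℝ f (z - α t)) (hα : HasDerivAt α α' t) :
    deriv (fun τ => f (z - α τ)) t + inner ℝ α' (gradient (fun y => f (y - α t)) z) = 0 := by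
  have htime : HasDerivAt (fun τ => f (z - α τ)) (fderiv ℝ f (z - α t) (-α')) t :=
    hf.hasFDerivAt.comp_hasDerivAt t ((hasDerivAt_const t z).sub hα |>.congr_deriv (zero_sub _))
  rw [htime.deriv, inner_gradient_right, fderiv_comp_sub, map_neg]
  simp

theorem EuclideanSpace.norm_vec_two (a b : ℝ) : ‖!₂[a, b]‖ = √(a ^ 2 + b ^ 2) := by
  simp [EuclideanSpace.norm_eq, Fin.sum_univ_two]

theorem EuclideanSpace.norm_mul_cos_mul_sin (ρ t : ℝ) : ‖!₂[ρ * cos t, ρ * sin t]‖ = |ρ| := by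
  rw [EuclideanSpace.norm_vec_two, mul_pow, mul_pow, ← mul_add, cos_sq_add_sin_sq, mul_one,
    sqrt_sq_eq_abs]

theorem EuclideanSpace.hasDerivAt_mul_cos_mul_sin (ρ t : ℝ) :
    HasDerivAt (fun s => !₂[ρ * cos s, ρ * sin s]) !₂[-(ρ * sin t), ρ * cos t] t := by
  have h : HasDerivAt (fun s => (![ρ * cos s, ρ * sin s] : Fin 2 → ℝ))
      ![-(ρ * sin t), ρ * cos t] t := by
    rw [hasDerivAt_pi]
    intro i
    fin_cases i
    · simpa [mul_neg] using (hasDerivAt_cos t).const_mul ρ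
    · simpa using (hasDerivAt_sin t).const_mul ρ
  exact (PiLp.continuousLinearEquiv 2 ℝ (fun _ : Fin 2 => ℝ)).symm.hasFDerivAt.comp_hasDerivAt t h

theorem eventually_nhdsSet_sphere_comp_sub_eq_zero {E M : Type*} [NormedAddCommGroup E] [Zero M]
    [TopologicalSpace M] {f : E → M} {r σ : ℝ} (hf : tsupport f ⊆ ball 0 r) {a : E}
    (hσ : r + ‖a‖ < σ) : ∀ᶠ z in 𝓝ˢ (sphere 0 σ), f (z - a) = 0 := by
  have hsphere : sphere (0 : E) σ ⊆ {z | r + ‖a‖ < ‖z‖} := fun z hz => by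
    simpa [mem_sphere_zero_iff_norm.mp hz] using hσ
  filter_upwards [(isOpen_lt continuous_const continuous_norm).mem_nhdsSet.mpr hsphere]
    with z hz
  refine image_eq_zero_of_notMem_tsupport fun hmem => ?_
  have hshift : ‖z - a‖ < r := mem_ball_zero_iff.mp (hf hmem)
  have hfar : r + ‖a‖ < ‖z‖ := hz
  linarith [norm_sub_norm_le z a]

theorem stmt8 (ρ σ : ℝ) (hρ : 0 < ρ) (hσ : 3 * ρ / 2 < σ)
    (f : EuclideanSpace ℝ (Fin 2) → ℝ) (hf : ContDiff ℝ 1 f)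
    (hsupp : tsupport f ⊆ Metric.ball (0 : EuclideanSpace ℝ (Fin 2)) (ρ / 2))
    (α : ℝ → EuclideanSpace ℝ (Fin 2))
    (hα : ∀ t, α t 0 = ρ * Real.cos t ∧ α t 1 = ρ * Real.sin t)
    (v : EuclideanSpace ℝ (Fin 2) → ℝ → ℝ)
    (hv : ∀ z t, v z t = f (z - α t)) :
    (∀ z : EuclideanSpace ℝ (Fin 2), ∀ t ∈ Set.Ioo (0:ℝ) (2 * π),
        deriv (fun τ => v z τ) t + (inner ℝ (deriv α t) (gradient (fun y => v y t) z) : ℝ) = 0)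
    ∧ (∀ t : ℝ, ‖deriv α t‖ = ρ)
    ∧ (∀ t ∈ Set.Icc (0:ℝ) (2 * π),
        ∀ᶠ z in nhdsSet (Metric.sphere (0 : EuclideanSpace ℝ (Fin 2)) σ), v z t = 0) := by
  obtain rfl : α = fun s => !₂[ρ * cos s, ρ * sin s] := by
    funext t
    ext i
    fin_cases i <;> simp [hα]
  obtain rfl : v = fun z t => f (z - !₂[ρ * cos t, ρ * sin t]) := by
    funext z t
    exact hv z t
  have hvelocity (t : ℝ) := (EuclideanSpace.hasDerivAt_mul_cos_mul_sin ρ t).deriv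
  refine ⟨fun z t _ => ?_, fun t => ?_, fun t _ => ?_⟩
  · rw [hvelocity]
    exact deriv_comp_sub_add_inner_gradient_eq_zero (hf.differentiable one_ne_zero _)
      (EuclideanSpace.hasDerivAt_mul_cos_mul_sin ρ t)
  · rw [hvelocity, EuclideanSpace.norm_vec_two, neg_sq, mul_pow, mul_pow, ← mul_add,
      sin_sq_add_cos_sq, mul_one, sqrt_sq hρ.le]
  · refine eventually_nhdsSet_sphere_comp_sub_eq_zero hsupp ?_
    rw [EuclideanSpace.norm_mul_cos_mul_sin, abs_of_pos hρ]
    linarith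
end
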